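/- arXiv:0902.3241 — 5 statements merged into one kernel-verified Lean document; each statement's English description precedes it below -/
import Mathlib

section
/- If F : [0,∞) → (0,∞) is a smooth nondecreasing function satisfying F''(V) ≤ (36π − F'(V)²)/(6 F(V)) for all V ≥ 0, then the function m(V) = F(V)^{1/3}(36π − F'(V)²) is nondecreasing on [0,∞). -/
open Real Set

/-- If `F : [0,∞) → (0,∞)` is a smooth nondecreasing function satisfying
`F''(V) ≤ (36π − F'(V)²)/(6 F(V))` for all `V ≥ 0`, then the mass function
`m(V) = F(V)^{1/3}(36π − F'(V)²)` is nondecreasing on `[0,∞)`. -/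
theorem mass_monotone
    (F : ℝ → ℝ) (hF : ContDiff ℝ (⊤ : ℕ∞) F)
    (hpos : ∀ V ≥ (0:ℝ), 0 < F V)
    (hmono : ∀ V ≥ (0:ℝ), 0 ≤ deriv F V)
    (hineq : ∀ V ≥ (0:ℝ),
      deriv (deriv F) V ≤ (36 * π - (deriv F V) ^ 2) / (6 * F V)) :
    MonotoneOn (fun V => (F V) ^ ((1:ℝ)/3) * (36 * π - (deriv F V) ^ 2))
      (Set.Ici (0:ℝ)) := by
  have hF1 : Differentiable ℝ F := hF.differentiable (by simp)
  have hF2 : ContDiff ℝ ((⊤:ℕ∞) : WithTop ℕ∞) F := hF.of_le (by simp)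
  have hF' : ContDiff ℝ ((⊤:ℕ∞) : WithTop ℕ∞) (deriv F) := (contDiff_infty_iff_deriv.mp hF2).2
  have hF'1 : Differentiable ℝ (deriv F) := (contDiff_infty_iff_deriv.mp hF').1
  -- derivative of m at each x ≥ 0
  have hder : ∀ x ≥ (0:ℝ), HasDerivAt
      (fun V => (F V) ^ ((1:ℝ)/3) * (36 * π - (deriv F V) ^ 2))
      ((deriv F x * (1/3) * F x ^ ((1:ℝ)/3 - 1)) * (36 * π - (deriv F x) ^ 2)
        + F x ^ ((1:ℝ)/3) * (0 - 2 * deriv F x ^ 1 * deriv (deriv F) x)) x := by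
    intro x hx
    have h1 : HasDerivAt (fun V => (F V) ^ ((1:ℝ)/3))
        (deriv F x * (1/3) * F x ^ ((1:ℝ)/3 - 1)) x :=
      (hF1 x).hasDerivAt.rpow_const (Or.inl (hpos x hx).ne')
    have h2 : HasDerivAt (fun V => 36 * π - (deriv F V) ^ 2)
        (0 - 2 * deriv F x ^ 1 * deriv (deriv F) x) x :=
      (hasDerivAt_const x (36 * π)).sub (((hF'1 x).hasDerivAt).pow 2)
    exact h1.mul h2
  apply monotoneOn_of_deriv_nonneg (convex_Ici 0)
  · intro x hx
    exact ((hder x hx).continuousAt).continuousWithinAt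
  · intro x hx
    rw [interior_Ici] at hx
    exact ((hder x hx.le).differentiableAt).differentiableWithinAt
  · intro x hx
    rw [interior_Ici] at hx
    have hx0 : (0:ℝ) ≤ x := hx.le
    rw [(hder x hx0).deriv]
    set a := F x with ha
    set d := deriv F x with hd
    set c := deriv (deriv F) x with hc
    have hapos : 0 < a := hpos x hx0
    have hdpos : 0 ≤ d := hmono x hx0
    have hppos : 0 < a ^ ((1:ℝ)/3 - 1) := Real.rpow_pos_of_pos hapos _
    have hsplit : a ^ ((1:ℝ)/3) = a * a ^ ((1:ℝ)/3 - 1) := by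
      have h1 : a ^ ((1:ℝ)/3) = a ^ ((1:ℝ) + ((1:ℝ)/3 - 1)) := by norm_num
      rw [h1, Real.rpow_add hapos, Real.rpow_one]
    have hkey : 2 * a * c ≤ (36 * π - d ^ 2) / 3 := by
      have h : c ≤ (36 * π - d ^ 2) / (6 * a) := hineq x hx0
      have h6 : c * (6 * a) ≤ 36 * π - d ^ 2 := (le_div_iff₀ (by positivity)).mp h
      linarith
    rw [hsplit]
    nlinarith [mul_nonneg (mul_nonneg hppos.le hdpos)
      (sub_nonneg.mpr hkey)]
end

section
/- If A : [0,∞) → (0,∞) is a smooth function with A'(V) ≥ 0 satisfying A(V)² A''(V) = 4π − (3/4) A'(V)² A(V) for all V, then the function m(V) = (A(V)/(16π))^{1/2} (1 − A(V) A'(V)²/(16π)) is constant. -/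
open Real Set
open scoped ContDiff

lemma hawking_aux (p s a a' a'' : ℝ) (hp : 0 < p) (hs : 0 < s) (hsq : s^2 = a/(16*p))
    (hode : a^2*a'' = 4*p - (3/4)*a'^2*a) :
    1/(2*s) * (a'/(16*p)) * (1 - a*a'^2/(16*p)) +
      s * (-((a'*a'^2 + a*(2*a'*a''))/(16*p))) = 0 := by
  have ha : a = 16*p*s^2 := by field_simp at hsq; linarith
  subst ha
  have hs' : s ≠ 0 := ne_of_gt hs
  have hp' : p ≠ 0 := ne_of_gt hp
  have h' : 64*p*s^4*a'' = 1 - 3*s^2*a'^2 := by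
    have : 4*p*(64*p*s^4*a'') = 4*p*(1 - 3*s^2*a'^2) := by linear_combination hode
    exact mul_left_cancel₀ (by positivity) this
  field_simp
  linear_combination (-a') * h'

/-- If `A : [0,∞) → (0,∞)` is smooth with `A' ≥ 0` and satisfies the
zero-scalar-curvature ODE `A² A'' = 4π − (3/4) A'² A`, then the Hawking mass
`m(V) = √(A(V)/(16π)) (1 − A(V)A'(V)²/(16π))` is constant on `[0,∞)`. -/
theorem hawking_mass_constant_of_scalar_flat
    (A : ℝ → ℝ) (hA : ContDiff ℝ (⊤ : ℕ∞) A)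
    (hpos : ∀ V ≥ (0:ℝ), 0 < A V)
    (hmono : ∀ V ≥ (0:ℝ), 0 ≤ deriv A V)
    (hode : ∀ V ≥ (0:ℝ),
      (A V) ^ 2 * deriv (deriv A) V = 4 * π - (3/4) * (deriv A V) ^ 2 * A V) :
    ∀ V ∈ Set.Ici (0:ℝ), ∀ W ∈ Set.Ici (0:ℝ),
      Real.sqrt (A V / (16 * π)) * (1 - A V * (deriv A V) ^ 2 / (16 * π)) =
      Real.sqrt (A W / (16 * π)) * (1 - A W * (deriv A W) ^ 2 / (16 * π)) := by
  have hπ : (0:ℝ) < π := Real.pi_pos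
  have hA' : ContDiff ℝ ∞ A := hA.of_le (by simp)
  have hdA : ContDiff ℝ ∞ (deriv A) := (contDiff_infty_iff_deriv.mp hA').2
  set m : ℝ → ℝ := fun V =>
    Real.sqrt (A V / (16 * π)) * (1 - A V * (deriv A V) ^ 2 / (16 * π)) with hm
  -- derivative of m is 0 on Ici 0
  have key : ∀ x ∈ Set.Ici (0:ℝ), HasDerivAt m 0 x := by
    intro x hx
    have hax : 0 < A x := hpos x hx
    have h1 : HasDerivAt A (deriv A x) x :=
      (hA'.differentiable (by simp) x).hasDerivAt
    have h2 : HasDerivAt (deriv A) (deriv (deriv A) x) x :=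
      (hdA.differentiable (by simp) x).hasDerivAt
    have hne : A x / (16 * π) ≠ 0 := by positivity
    have hs : HasDerivAt (fun V => Real.sqrt (A V / (16 * π)))
        (1 / (2 * Real.sqrt (A x / (16 * π))) * (deriv A x / (16 * π))) x :=
      (Real.hasDerivAt_sqrt hne).comp x (h1.div_const _)
    have hg : HasDerivAt (fun V => 1 - A V * (deriv A V) ^ 2 / (16 * π))
        (-((deriv A x * (deriv A x) ^ 2 +
            A x * (2 * deriv A x ^ 1 * deriv (deriv A) x)) / (16 * π))) x := by
      have := ((h1.mul (h2.pow 2)).div_const (16 * π)).const_sub 1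
      convert this using 1 <;> first | rfl | simp
    have hmul := hs.mul hg
    have hsq : Real.sqrt (A x / (16 * π)) ^ 2 = A x / (16 * π) :=
      Real.sq_sqrt (le_of_lt (by positivity))
    have hspos : 0 < Real.sqrt (A x / (16 * π)) := Real.sqrt_pos.mpr (by positivity)
    have hzero := hawking_aux π (Real.sqrt (A x / (16 * π))) (A x) (deriv A x)
      (deriv (deriv A) x) hπ hspos hsq (hode x hx)
    convert hmul using 1 <;> first | rfl | skip
    linear_combination -hzero
  -- constancy on [0, b] for any b ≥ 0
  have const : ∀ b ≥ (0:ℝ), ∀ x ∈ Set.Icc (0:ℝ) b, m x = m 0 := by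
    intro b hb
    apply constant_of_has_deriv_right_zero
    · intro x hx
      exact (key x hx.1).continuousAt.continuousWithinAt
    · intro x hx
      exact (key x hx.1).hasDerivWithinAt
  intro V hV W hW
  have h1 : m V = m 0 := const (max V W) (le_max_of_le_left hV) V ⟨hV, le_max_left _ _⟩
  have h2 : m W = m 0 := const (max V W) (le_max_of_le_left hV) W ⟨hW, le_max_right _ _⟩
  show m V = m W
  rw [h1, h2]
end

section
/- If A : [0,∞) → (0,∞) is smooth with A(0) at some value A₀ > 0, A'(0) = 0, A'(V) ≥ 0 for V ≥ 0, and A(V)² A''(V) ≤ 4π − (3/4) A'(V)² A(V) for all V, and if m(V) := (A(V)/(16π))^{1/2}(1 − A(V)A'(V)²/(16π)) tends to a limit m as V → ∞, then m ≥ √(A₀/(16π)). -/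
open Real Set Filter

/-- Spherically symmetric Penrose inequality, ODE form: if `A : [0,∞) → (0,∞)`
is smooth with `A(0) = A₀ > 0`, `A'(0) = 0`, `A' ≥ 0` and
`A² A'' ≤ 4π − (3/4) A'² A`, and the Hawking mass
`m(V) = √(A(V)/(16π))(1 − A(V)A'(V)²/(16π))` tends to `m` as `V → ∞`,
then `m ≥ √(A₀/(16π))`. -/
theorem penrose_spherically_symmetric
    (A : ℝ → ℝ) (A₀ m : ℝ) (hA : ContDiff ℝ (⊤ : ℕ∞) A)
    (hA₀ : A 0 = A₀) (hA₀pos : 0 < A₀)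
    (hpos : ∀ V ≥ (0:ℝ), 0 < A V)
    (hderiv0 : deriv A 0 = 0)
    (hmono : ∀ V ≥ (0:ℝ), 0 ≤ deriv A V)
    (hineq : ∀ V ≥ (0:ℝ),
      (A V) ^ 2 * deriv (deriv A) V ≤ 4 * π - (3/4) * (deriv A V) ^ 2 * A V)
    (hlim : Tendsto
      (fun V => Real.sqrt (A V / (16 * π)) *
        (1 - A V * (deriv A V) ^ 2 / (16 * π))) atTop (nhds m)) :
    Real.sqrt (A₀ / (16 * π)) ≤ m := by
  have hπ : 0 < π := Real.pi_pos
  set c : ℝ := 16 * π with hc_def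
  have hc : 0 < c := by positivity
  set g : ℝ → ℝ := fun V => Real.sqrt (A V / c) *
      (1 - A V * (deriv A V) ^ 2 / c) with hg_def
  have hdA : Differentiable ℝ A := hA.differentiable (by simp)
  have hdA' : Differentiable ℝ (deriv A) := by
    have h2 : ContDiff ℝ 2 A := hA.of_le (WithTop.coe_le_coe.mpr le_top)
    exact ((contDiff_succ_iff_deriv (n := 1)).mp (h2.of_le (by norm_num))).2.2.differentiable (by simp)
  -- derivative of g
  have key : ∀ V : ℝ, 0 < A V → HasDerivAt g
      (1 / (2 * Real.sqrt (A V / c)) * (deriv A V / c) *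
        (1 - A V * (deriv A V) ^ 2 / c)
        + Real.sqrt (A V / c) *
          (-((deriv A V * (deriv A V) ^ 2
            + A V * (2 * (deriv A V) ^ 1 * deriv (deriv A) V)) / c))) V := by
    intro V hV
    have h1 : HasDerivAt (fun W => A W / c) (deriv A V / c) V :=
      (hdA V).hasDerivAt.div_const c
    have h2 : HasDerivAt (fun W => Real.sqrt (A W / c))
        (1 / (2 * Real.sqrt (A V / c)) * (deriv A V / c)) V :=
      (Real.hasDerivAt_sqrt (by positivity)).comp V h1
    have h3 : HasDerivAt (fun W => A W * (deriv A W) ^ 2)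
        (deriv A V * (deriv A V) ^ 2
          + A V * (2 * (deriv A V) ^ 1 * deriv (deriv A) V)) V :=
      (hdA V).hasDerivAt.mul ((hdA' V).hasDerivAt.pow 2)
    have h4 : HasDerivAt (fun W => 1 - A W * (deriv A W) ^ 2 / c)
        (-((deriv A V * (deriv A V) ^ 2
          + A V * (2 * (deriv A V) ^ 1 * deriv (deriv A) V)) / c)) V :=
      (h3.div_const c).const_sub 1
    exact h2.mul h4
  -- nonnegativity of the derivative
  have hD : ∀ V ≥ (0:ℝ), 0 ≤ deriv g V := by
    intro V hV
    have hAV := hpos V hV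
    rw [(key V hAV).deriv]
    set f := A V
    set p := deriv A V
    set q := deriv (deriv A) V
    set s := Real.sqrt (f / c) with hs_def
    have hspos : 0 < s := Real.sqrt_pos.mpr (by positivity)
    have hss : s * s = f / c := Real.mul_self_sqrt (by positivity)
    have hp : 0 ≤ p := hmono V hV
    have hq : f ^ 2 * q ≤ 4 * π - 3 / 4 * p ^ 2 * f := hineq V hV
    have hk : (0:ℝ) < 2 * s * c ^ 2 := by positivity
    have expand :
        (2 * s * c ^ 2) * (1 / (2 * s) * (p / c) * (1 - f * p ^ 2 / c)
          + s * (-((p * p ^ 2 + f * (2 * p ^ 1 * q)) / c)))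
        = p * (c - 3 * f * p ^ 2 - 4 * f ^ 2 * q)
          + (f - s * s * c) * (2 * p ^ 3 + 4 * f * p * q) := by
      field_simp
      ring
    have hbr : 0 ≤ p * (c - 3 * f * p ^ 2 - 4 * f ^ 2 * q) := by
      apply mul_nonneg hp
      have : 4 * (f ^ 2 * q) ≤ 4 * (4 * π - 3 / 4 * p ^ 2 * f) := by linarith
      rw [hc_def]; nlinarith
    have hzero : (f - s * s * c) = 0 := by
      rw [hss]; field_simp; ring
    have hprod : 0 ≤ (2 * s * c ^ 2) * (1 / (2 * s) * (p / c) * (1 - f * p ^ 2 / c)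
          + s * (-((p * p ^ 2 + f * (2 * p ^ 1 * q)) / c))) := by
      rw [expand, hzero]; simpa using hbr
    exact nonneg_of_mul_nonneg_right hprod hk
  -- g is continuous
  have hgcont : Continuous g := by
    apply Continuous.mul
    · exact Real.continuous_sqrt.comp (hdA.continuous.div_const c)
    · exact continuous_const.sub ((hdA.continuous.mul ((hdA'.continuous).pow 2)).div_const c)
  -- g is monotone on [0, ∞)
  have hgm : MonotoneOn g (Ici 0) := by
    apply monotoneOn_of_deriv_nonneg (convex_Ici 0) hgcont.continuousOn
    · intro V hV
      rw [interior_Ici] at hV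
      exact ((key V (hpos V (le_of_lt hV))).differentiableAt).differentiableWithinAt
    · intro V hV
      rw [interior_Ici] at hV
      exact hD V (le_of_lt hV)
  -- g 0 = √(A₀ / c)
  have hg0 : g 0 = Real.sqrt (A₀ / c) := by
    simp [hg_def, hA₀, hderiv0]
  have : g 0 ≤ m := by
    refine ge_of_tendsto hlim ?_
    filter_upwards [eventually_ge_atTop (0:ℝ)] with V hV
    exact hgm (le_refl (0:ℝ)) hV hV
  rwa [hg0] at this
end

section
/- Let n ≥ 2, let c > 0, and suppose F : [0, L] → [0,∞) is continuous, smooth on (0, L), F(0) = F(L) = 0, F(V) = F(L−V), F is strictly increasing on [0, L/2], F'(0⁺) = n·ω_{n−1}^{1/(n−1)}, and F''(V) ≤ −(n c/(n−1)) F(V)^{−(n−2)/n} on (0, L/2). Then L ≤ 2 (n²ω_{n−1}^{2/(n−1)})^{(n−1)/2} ((n−1)/(n²c))^{n/2} ∫₀¹ (1 − z^{2/n})^{−1/2} dz. -/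
open Real Set intervalIntegral MeasureTheory

private lemma bray_geom_aux {n : ℕ} (hn : 1 ≤ n) {z : ℝ} (h0 : 0 ≤ z) (h1 : z ≤ 1) :
    (1 - z) / n ≤ 1 - z ^ ((2:ℝ) / n) := by
  have hn0 : (0:ℝ) < n := by exact_mod_cast hn
  set u : ℝ := z ^ ((1:ℝ)/n) with hu
  have hu0 : 0 ≤ u := Real.rpow_nonneg h0 _
  have hu1 : u ≤ 1 := Real.rpow_le_one h0 h1 (by positivity)
  have hun : u ^ n = z := by
    rw [hu, ← Real.rpow_natCast (z ^ ((1:ℝ)/n)) n, ← Real.rpow_mul h0]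
    rw [one_div, inv_mul_cancel₀ hn0.ne', Real.rpow_one]
  have hu2 : z ^ ((2:ℝ)/n) = u ^ 2 := by
    rw [hu, ← Real.rpow_natCast (z ^ ((1:ℝ)/n)) 2, ← Real.rpow_mul h0]
    norm_num
    ring_nf
  have hsum : (∑ i ∈ Finset.range n, u ^ i) ≤ n := by
    calc (∑ i ∈ Finset.range n, u ^ i) ≤ ∑ _i ∈ Finset.range n, (1:ℝ) :=
          Finset.sum_le_sum fun i _ => pow_le_one₀ hu0 hu1
      _ = n := by simp
  have h1z : 1 - z = (1 - u) * ∑ i ∈ Finset.range n, u ^ i := by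
    have h := geom_sum_mul u n
    have : (∑ i ∈ Finset.range n, u ^ i) * (u - 1) = z - 1 := by rw [h, hun]
    linarith [this]
  have h1u : (1 - z) / n ≤ 1 - u := by
    rw [div_le_iff₀ hn0, h1z]
    have hnn : (0:ℝ) ≤ 1 - u := by linarith
    calc (1 - u) * ∑ i ∈ Finset.range n, u ^ i ≤ (1 - u) * n :=
      mul_le_mul_of_nonneg_left hsum hnn
      _ = (1 - u) * n := rfl
  have hsq : u ^ 2 ≤ u := by nlinarith
  rw [hu2]; linarith

private lemma bray_h_meas {n : ℕ} :
    Measurable fun z : ℝ => (Real.sqrt (1 - z ^ ((2:ℝ)/n)))⁻¹ := by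
  have hc : Continuous fun z : ℝ => Real.sqrt (1 - z ^ ((2:ℝ)/n)) := by
    apply Real.continuous_sqrt.comp
    apply Continuous.sub continuous_const
    exact continuous_iff_continuousAt.mpr fun x =>
      Real.continuousAt_rpow_const x _ (Or.inr (by positivity))
  exact hc.measurable.inv

private lemma bray_h_integrable {n : ℕ} (hn : 1 ≤ n) :
    IntervalIntegrable (fun z : ℝ => (Real.sqrt (1 - z ^ ((2:ℝ)/n)))⁻¹)
      MeasureTheory.volume 0 1 := by
  have hn0 : (0:ℝ) < n := by exact_mod_cast hn
  -- dominating function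
  have hi1 : IntervalIntegrable (fun x : ℝ => x ^ (-(1:ℝ)/2)) volume 0 1 :=
    intervalIntegral.intervalIntegrable_rpow' (by norm_num)
  have hi2 : IntervalIntegrable (fun x : ℝ => (1 - x) ^ (-(1:ℝ)/2)) volume 0 1 := by
    have := hi1.comp_sub_left 1
    simpa using this.symm
  have hi3 : IntervalIntegrable (fun x : ℝ => Real.sqrt n * (1 - x) ^ (-(1:ℝ)/2)) volume 0 1 :=
    hi2.const_mul _
  apply hi3.mono_fun (bray_h_meas.aestronglyMeasurable)
  filter_upwards [MeasureTheory.ae_restrict_mem measurableSet_uIoc] with z hz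
  rw [Set.uIoc_of_le (by norm_num : (0:ℝ) ≤ 1)] at hz
  obtain ⟨hz0, hz1⟩ := hz
  have hz0' : (0:ℝ) ≤ z := hz0.le
  have hkey : (1 - z)/n ≤ 1 - z ^ ((2:ℝ)/n) := bray_geom_aux hn hz0' hz1
  have hnneg : 0 ≤ 1 - z ^ ((2:ℝ)/n) := le_trans (div_nonneg (by linarith) hn0.le) hkey
  -- both sides nonneg
  rw [Real.norm_eq_abs, Real.norm_eq_abs, abs_of_nonneg (by positivity),
    abs_of_nonneg (mul_nonneg (Real.sqrt_nonneg _) (Real.rpow_nonneg (by linarith) _))]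
  rcases eq_or_lt_of_le hz1 with rfl | hz1'
  · have : (1:ℝ) ^ ((2:ℝ)/n) = 1 := Real.one_rpow _
    rw [this]
    simp
  · have h1z : (0:ℝ) < 1 - z := by linarith
    have hpos : (0:ℝ) < (1 - z)/n := by positivity
    have hs : Real.sqrt ((1-z)/n) ≤ Real.sqrt (1 - z ^ ((2:ℝ)/n)) := Real.sqrt_le_sqrt hkey
    have hspos : 0 < Real.sqrt ((1-z)/n) := Real.sqrt_pos.mpr hpos
    have hinv : (Real.sqrt (1 - z ^ ((2:ℝ)/n)))⁻¹ ≤ (Real.sqrt ((1-z)/n))⁻¹ :=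
      inv_anti₀ hspos hs
    refine hinv.trans_eq ?_
    rw [show (1-z)/(n:ℝ) = (1-z) * (n:ℝ)⁻¹ by ring, Real.sqrt_mul h1z.le,
      mul_inv, Real.sqrt_inv, inv_inv, mul_comm]
    congr 1
    rw [Real.rpow_def_of_pos h1z]
    rw [Real.sqrt_eq_rpow, Real.rpow_def_of_pos h1z, ← Real.exp_neg]
    ring_nf

set_option maxHeartbeats 2000000 in
/-- ODE core of Bray's proof of Bishop's theorem: let `n ≥ 2`, `c > 0`, and let
`ω` be the area of the unit `(n−1)`-sphere in `ℝⁿ`.  If `F : [0,L] → [0,∞)` is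
continuous, smooth and positive on `(0,L)`, vanishes at `0` and `L`, is
symmetric about `L/2` and strictly increasing on `[0,L/2]`, has right
derivative `n·ω^{1/(n−1)}` at `0`, and satisfies
`F'' ≤ −(n c/(n−1)) F^{−(n−2)/n}` on `(0, L/2)`, then
`L ≤ 2 (n²ω^{2/(n−1)})^{(n−1)/2} ((n−1)/(n²c))^{n/2} ∫₀¹ (1 − z^{2/n})^{−1/2} dz`. -/
theorem bishop_ode_core
    (n : ℕ) (hn : 2 ≤ n) (c ω L : ℝ) (hc : 0 < c) (hL : 0 < L)
    (hω : ω = 2 * π ^ ((n : ℝ) / 2) / Real.Gamma ((n : ℝ) / 2))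
    (F : ℝ → ℝ)
    (hcont : ContinuousOn F (Set.Icc 0 L))
    (hsm : ContDiffOn ℝ (⊤ : ℕ∞) F (Set.Ioo 0 L))
    (hF0 : F 0 = 0) (hFL : F L = 0)
    (hFpos : ∀ V ∈ Set.Ioo 0 L, 0 < F V)
    (hsymm : ∀ V ∈ Set.Icc 0 L, F V = F (L - V))
    (hincr : StrictMonoOn F (Set.Icc 0 (L / 2)))
    (hF'0 : HasDerivWithinAt F ((n : ℝ) * ω ^ ((1:ℝ) / ((n : ℝ) - 1)))
      (Set.Ioi 0) 0)
    (hineq : ∀ V ∈ Set.Ioo 0 (L / 2),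
      deriv (deriv F) V ≤
        -((n : ℝ) * c / ((n : ℝ) - 1)) * (F V) ^ (-(((n : ℝ) - 2) / (n : ℝ)))) :
    L ≤ 2 * ((n : ℝ) ^ 2 * ω ^ ((2:ℝ) / ((n : ℝ) - 1))) ^ (((n : ℝ) - 1) / 2) *
        (((n : ℝ) - 1) / ((n : ℝ) ^ 2 * c)) ^ ((n : ℝ) / 2) *
        ∫ z in (0:ℝ)..1, (Real.sqrt (1 - z ^ ((2:ℝ) / (n : ℝ))))⁻¹ := by
  have hn2 : (2:ℝ) ≤ (n:ℝ) := by exact_mod_cast hn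
  have hn0 : (0:ℝ) < n := by linarith
  have hn1 : (0:ℝ) < (n:ℝ) - 1 := by linarith
  have hΓ : 0 < Real.Gamma ((n:ℝ)/2) := Real.Gamma_pos_of_pos (by positivity)
  have hωpos : 0 < ω := by rw [hω]; positivity
  set p : ℝ := (2:ℝ) / (n:ℝ) with hp
  have hppos : 0 < p := by positivity
  set m : ℝ := (n:ℝ) * ω ^ ((1:ℝ)/((n:ℝ)-1)) with hmdef
  have hmpos : 0 < m := by positivity
  set b : ℝ := (n:ℝ)^2 * c / ((n:ℝ)-1) with hbdef
  have hbpos : 0 < b := by positivity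
  set h : ℝ → ℝ := fun z => (Real.sqrt (1 - z ^ p))⁻¹ with hhdef
  have hhnn : ∀ z, 0 ≤ h z := fun z => inv_nonneg.mpr (Real.sqrt_nonneg _)
  have hhalf : L/2 < L := by linarith
  have hhalfpos : 0 < L/2 := by linarith
  have hsub : Ioo 0 (L/2) ⊆ Ioo 0 L := fun x hx => ⟨hx.1, lt_trans hx.2 hhalf⟩
  have hsub' : Ioc 0 (L/2) ⊆ Ioo 0 L := fun x hx => ⟨hx.1, lt_of_le_of_lt hx.2 hhalf⟩
  have hsub'' : Ioc 0 (L/2) ⊆ Icc 0 L := fun x hx => ⟨hx.1.le, le_trans hx.2 hhalf.le⟩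
  -- derivative machinery
  have hdiffF : ∀ x ∈ Ioo 0 L, HasDerivAt F (deriv F x) x := by
    intro x hx
    exact ((hsm.differentiableOn (by simp)).differentiableAt
      (isOpen_Ioo.mem_nhds hx)).hasDerivAt
  have hF'cont : ContinuousOn (deriv F) (Ioo 0 L) :=
    hsm.continuousOn_deriv_of_isOpen isOpen_Ioo (by simp)
  have hdF' : ∀ x ∈ Ioo 0 L, HasDerivAt (deriv F) (deriv (deriv F) x) x := by
    intro x hx
    have h2 : ContDiffOn ℝ 1 (deriv F) (Ioo 0 L) := hsm.deriv_of_isOpen isOpen_Ioo (WithTop.coe_le_coe.mpr le_top)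
    exact ((h2.differentiableOn one_ne_zero).differentiableAt (isOpen_Ioo.mem_nhds hx)).hasDerivAt
  -- second derivative negative
  have hF''neg : ∀ x ∈ Ioo 0 (L/2), deriv (deriv F) x < 0 := by
    intro x hx
    refine lt_of_le_of_lt (hineq x hx) ?_
    have hX : 0 < (F x) ^ (-(((n:ℝ)-2)/(n:ℝ))) := Real.rpow_pos_of_pos (hFpos x (hsub hx)) _
    have hK : 0 < (n:ℝ)*c/((n:ℝ)-1) := by positivity
    exact mul_neg_of_neg_of_pos (by linarith) hX
  -- deriv F strictly antitone on Ioo 0 (L/2)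
  have hanti : StrictAntiOn (deriv F) (Ioo 0 (L/2)) := by
    apply strictAntiOn_of_deriv_neg (convex_Ioo _ _) (hF'cont.mono hsub)
    rw [interior_Ioo]
    exact fun x hx => hF''neg x hx
  -- positivity of deriv F
  have hF'pos : ∀ x ∈ Ioo 0 (L/2), 0 < deriv F x := by
    intro x hx
    set y : ℝ := (x + L/2)/2 with hy
    have hxy : x < y := by rw [hy]; linarith [hx.2]
    have hyL : y < L/2 := by rw [hy]; linarith [hx.2]
    have hy0 : 0 < y := lt_trans hx.1 hxy
    obtain ⟨ξ, hξ, hslope⟩ := exists_deriv_eq_slope F hxy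
      (hcont.mono (fun z hz => ⟨le_trans hx.1.le hz.1, le_trans hz.2 (by linarith)⟩))
      ((hsm.differentiableOn (by simp)).mono (fun z hz =>
        ⟨lt_trans hx.1 hz.1, by linarith [hz.2]⟩))
    have hξmem : ξ ∈ Ioo 0 (L/2) := ⟨lt_trans hx.1 hξ.1, lt_trans hξ.2 hyL⟩
    have hFlt : F x < F y := hincr ⟨hx.1.le, hx.2.le⟩ ⟨hy0.le, hyL.le⟩ hxy
    have hsl : 0 < deriv F ξ := by rw [hslope]; exact div_pos (by linarith) (by linarith)
    exact lt_trans hsl (hanti hx hξmem hξ.1)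
  -- deriv F bounded by m
  have hF'le : ∀ x ∈ Ioo 0 (L/2), deriv F x ≤ m := by
    intro x hx
    have hslope_t : Filter.Tendsto (fun t => F t / t) (nhdsWithin 0 (Ioi 0)) (nhds m) := by
      have h0 : (0:ℝ) ∉ Ioi (0:ℝ) := by simp
      have := (hasDerivWithinAt_iff_tendsto_slope' h0).mp hF'0
      refine this.congr (fun t => ?_)
      simp [slope_def_field, hF0]
    refine ge_of_tendsto hslope_t ?_
    filter_upwards [Ioc_mem_nhdsGT_of_mem ⟨le_refl (0:ℝ), hx.1⟩] with t ht
    obtain ⟨ht0, htx⟩ := ht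
    have htL : t < L/2 := lt_of_le_of_lt htx hx.2
    obtain ⟨ξ, hξ, hslope⟩ := exists_deriv_eq_slope F ht0
      (hcont.mono (fun z hz => ⟨hz.1, le_trans hz.2 (by linarith)⟩))
      ((hsm.differentiableOn (by simp)).mono (fun z hz => ⟨hz.1, by linarith [hz.2]⟩))
    have hξmem : ξ ∈ Ioo 0 (L/2) := ⟨hξ.1, lt_trans hξ.2 htL⟩
    have hle : deriv F x ≤ deriv F ξ := by
      rcases eq_or_lt_of_le (le_of_lt (lt_of_lt_of_le hξ.2 htx)) with heq | hlt
      · rw [heq]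
      · exact (hanti hξmem hx hlt).le
    rw [hslope] at hle
    simpa [hF0] using hle
  -- the conserved-ish quantity G
  set G : ℝ → ℝ := fun x => (deriv F x)^2 + b * (F x) ^ p with hGdef
  have hbp : b * p = 2 * ((n:ℝ)*c/((n:ℝ)-1)) := by
    rw [hbdef, hp]; field_simp
  have hexp : p - 1 = -(((n:ℝ)-2)/(n:ℝ)) := by
    rw [hp]; field_simp; ring
  have hGderiv : ∀ x ∈ Ioo 0 (L/2), HasDerivAt G
      (2 * deriv F x * deriv (deriv F) x
        + b * (deriv F x * p * (F x) ^ (p-1))) x := by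
    intro x hx
    have h1 := (hdF' x (hsub hx)).pow 2
    have h2 := (HasDerivAt.rpow_const (p := p) (hdiffF x (hsub hx))
      (Or.inl (hFpos x (hsub hx)).ne')).const_mul b
    have := h1.add h2
    exact this.congr_deriv (by norm_num)
  have hGanti : AntitoneOn G (Ioc 0 (L/2)) := by
    apply antitoneOn_of_deriv_nonpos (convex_Ioc _ _)
    · apply ContinuousOn.add
      · exact (hF'cont.mono hsub').pow 2
      · exact ContinuousOn.const_smul
          ((hcont.mono hsub'').rpow_const (fun x hx => Or.inr hppos.le)) b
    · rw [interior_Ioc]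
      exact fun x hx => ((hGderiv x hx).differentiableAt).differentiableWithinAt
    · rw [interior_Ioc]
      intro x hx
      rw [(hGderiv x hx).deriv]
      have hA : 0 ≤ deriv F x := (hF'pos x hx).le
      have hX : 0 < (F x) ^ (p - 1) := Real.rpow_pos_of_pos (hFpos x (hsub hx)) _
      have hF2 : deriv (deriv F) x ≤ -((n:ℝ)*c/((n:ℝ)-1)) * (F x) ^ (p-1) := by
        rw [hexp]; exact hineq x hx
      set K : ℝ := (n:ℝ)*c/((n:ℝ)-1) with hK
      have h1 : 2 * deriv F x * deriv (deriv F) x ≤ 2 * deriv F x * (-K * (F x) ^ (p-1)) :=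
        mul_le_mul_of_nonneg_left hF2 (by linarith)
      have h2 : b * (deriv F x * p * (F x) ^ (p-1))
          = 2 * deriv F x * (K * (F x) ^ (p-1)) := by
        have : b * (deriv F x * p * (F x) ^ (p-1))
            = (b * p) * (deriv F x * (F x) ^ (p-1)) := by ring
        rw [this, hbp]; ring
      rw [h2] at *
      nlinarith [h1]
  -- G bounded by m^2
  have hGle : ∀ x ∈ Ioc 0 (L/2), G x ≤ m^2 := by
    intro x hx
    haveI : (nhdsWithin (0:ℝ) (Ioo 0 x)).NeBot := left_nhdsWithin_Ioo_neBot hx.1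
    have hF0t : Filter.Tendsto F (nhdsWithin 0 (Ioo 0 x)) (nhds 0) := by
      have h0cont : ContinuousWithinAt F (Icc 0 L) 0 := hcont 0 (left_mem_Icc.mpr hL.le)
      have := h0cont.tendsto
      rw [hF0] at this
      exact this.mono_left (nhdsWithin_mono 0 (fun z hz =>
        ⟨hz.1.le, le_trans hz.2.le (le_trans hx.2 hhalf.le)⟩))
    have hrpow : Filter.Tendsto (fun ε => (F ε) ^ p) (nhdsWithin 0 (Ioo 0 x)) (nhds 0) := by
      have hrc : ContinuousAt (fun y : ℝ => y ^ p) 0 :=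
        Real.continuousAt_rpow_const 0 p (Or.inr hppos.le)
      have := hrc.tendsto.comp hF0t
      simpa [Function.comp_def, Real.zero_rpow hppos.ne'] using this
    have htt : Filter.Tendsto (fun ε => m^2 + b * (F ε) ^ p)
        (nhdsWithin 0 (Ioo 0 x)) (nhds (m^2)) := by
      have := Filter.Tendsto.add (tendsto_const_nhds (x := m^2)) (hrpow.const_mul b)
      simpa using this
    refine ge_of_tendsto htt ?_
    filter_upwards [self_mem_nhdsWithin] with ε hε
    have hεIoc : ε ∈ Ioc 0 (L/2) := ⟨hε.1, le_trans hε.2.le hx.2⟩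
    have hεIoo : ε ∈ Ioo 0 (L/2) := ⟨hε.1, lt_of_lt_of_le hε.2 hx.2⟩
    have h1 : G x ≤ G ε := hGanti hεIoc hx hε.2.le
    have h2 : deriv F ε ≤ m := hF'le ε hεIoo
    have h2' : 0 ≤ deriv F ε := (hF'pos ε hεIoo).le
    have h3 : (deriv F ε)^2 ≤ m^2 := by nlinarith
    have h4 : G ε = (deriv F ε)^2 + b * (F ε) ^ p := rfl
    have h5 : G x ≤ (deriv F ε)^2 + b * (F ε)^p := by rw [← h4]; exact h1
    linarith
  -- derivative vanishes at the midpoint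
  have hmid : L/2 ∈ Ioo 0 L := ⟨hhalfpos, hhalf⟩
  have hFmid : deriv F (L/2) = 0 := by
    have hev : F =ᶠ[nhds (L/2)] fun V => F (L - V) :=
      Filter.eventuallyEq_of_mem (isOpen_Ioo.mem_nhds hmid)
        (fun y hy => hsymm y (Ioo_subset_Icc_self hy))
    have hinner : HasDerivAt (fun V : ℝ => L - V) (-1) (L/2) := by
      simpa using (hasDerivAt_id (L/2)).const_sub L
    have houter : HasDerivAt F (deriv F (L/2)) (L - L/2) := by
      rw [show L - L/2 = L/2 by ring]; exact hdiffF _ hmid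
    have hLd : HasDerivAt (fun V => F (L - V)) (deriv F (L/2) * (-1)) (L/2) :=
      houter.comp (L/2) hinner
    have h2 : deriv F (L/2) = deriv (fun V => F (L - V)) (L/2) := hev.deriv_eq
    rw [hLd.deriv] at h2
    linarith
  set M : ℝ := F (L/2) with hMdef
  have hMpos : 0 < M := hFpos _ hmid
  have hmidIoc : L/2 ∈ Ioc 0 (L/2) := ⟨hhalfpos, le_refl _⟩
  have hGmid : G (L/2) = b * M ^ p := by
    have : G (L/2) = (deriv F (L/2))^2 + b * M ^ p := rfl
    rw [this, hFmid]; ring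
  -- lower bound for deriv F
  have hlow : ∀ x ∈ Ioo 0 (L/2), Real.sqrt (b * (M^p - (F x)^p)) ≤ deriv F x := by
    intro x hx
    have h1 : G (L/2) ≤ G x := hGanti ⟨hx.1, hx.2.le⟩ hmidIoc hx.2.le
    rw [hGmid] at h1
    have h4 : G x = (deriv F x)^2 + b * (F x) ^ p := rfl
    rw [h4] at h1
    have h3 : b * (M^p - (F x)^p) ≤ (deriv F x)^2 := by ring_nf; ring_nf at h1; linarith
    calc Real.sqrt (b * (M^p - (F x)^p)) ≤ Real.sqrt ((deriv F x)^2) := Real.sqrt_le_sqrt h3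
      _ = deriv F x := by rw [Real.sqrt_sq (hF'pos x hx).le]
  have hMle : b * M ^ p ≤ m ^ 2 := by rw [← hGmid]; exact hGle _ hmidIoc
  -- integrability and FTC for h
  have hIint : IntervalIntegrable h MeasureTheory.volume 0 1 := by
    rw [hhdef, hp]; exact bray_h_integrable (by omega)
  have hhm : Measurable h := by rw [hhdef, hp]; exact bray_h_meas
  have hconth : ∀ s : ℝ, 0 ≤ s → s < 1 → ContinuousAt h s := by
    intro s h0 h1
    have hlt : s ^ p < 1 := by
      rcases eq_or_lt_of_le h0 with rfl | h0'
      · rw [Real.zero_rpow hppos.ne']; norm_num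
      · exact Real.rpow_lt_one h0 h1 hppos
    have hc1 : ContinuousAt (fun z : ℝ => Real.sqrt (1 - z ^ p)) s :=
      Real.continuous_sqrt.continuousAt.comp
        (continuousAt_const.sub (Real.continuousAt_rpow_const s p (Or.inr hppos.le)))
    have : ContinuousAt (fun z : ℝ => (Real.sqrt (1 - z ^ p))⁻¹) s :=
      hc1.inv₀ (Real.sqrt_pos.mpr (by linarith)).ne'
    rw [hhdef]; exact this
  set Ψ : ℝ → ℝ := fun t => ∫ z in (0:ℝ)..t, h z with hΨdef
  have hΨd : ∀ t ∈ Ico (0:ℝ) 1, HasDerivAt Ψ (h t) t := by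
    intro t ht
    have hsubI : Set.uIcc 0 t ⊆ Set.uIcc (0:ℝ) 1 := by
      rw [Set.uIcc_of_le ht.1, Set.uIcc_of_le (by norm_num : (0:ℝ) ≤ 1)]
      exact Icc_subset_Icc (le_refl _) ht.2.le
    exact intervalIntegral.integral_hasDerivAt_right (hIint.mono_set hsubI)
      hhm.stronglyMeasurable.stronglyMeasurableAtFilter (hconth t ht.1 ht.2)
  -- key algebraic identity
  set CM : ℝ := M ^ (((n:ℝ)-1)/(n:ℝ)) / Real.sqrt b with hCMdef
  have hCM0 : 0 ≤ CM := by
    rw [hCMdef]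
    exact div_nonneg (Real.rpow_nonneg hMpos.le _) (Real.sqrt_nonneg _)
  have hkey : ∀ y : ℝ, 0 ≤ y → y < M →
      CM * h (y / M) * Real.sqrt (b * (M ^ p - y ^ p)) = M := by
    intro y hy0 hyM
    have hyp : y ^ p < M ^ p := by
      rcases eq_or_lt_of_le hy0 with rfl | hy0'
      · rw [Real.zero_rpow hppos.ne']; exact Real.rpow_pos_of_pos hMpos _
      · exact Real.rpow_lt_rpow hy0 hyM hppos
    have hMp : 0 < M ^ p := Real.rpow_pos_of_pos hMpos _
    have hd : 0 < M ^ p - y ^ p := by linarith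
    have h1t : 1 - (y / M) ^ p = (M ^ p - y ^ p) / M ^ p := by
      rw [Real.div_rpow hy0 hMpos.le, sub_div, div_self hMp.ne']
    have hht : h (y / M) = Real.sqrt (M ^ p) / Real.sqrt (M ^ p - y ^ p) := by
      rw [hhdef]
      simp only
      rw [h1t, Real.sqrt_div hd.le, inv_div]
    have hMq : M ^ (((n:ℝ)-1)/(n:ℝ)) * Real.sqrt (M ^ p) = M := by
      rw [Real.sqrt_eq_rpow, ← Real.rpow_mul hMpos.le, ← Real.rpow_add hMpos]
      rw [show ((n:ℝ)-1)/(n:ℝ) + p * (1/2) = 1 by rw [hp]; field_simp; ring]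
      exact Real.rpow_one M
    have hsb : Real.sqrt b ≠ 0 := (Real.sqrt_pos.mpr hbpos).ne'
    have hsd : Real.sqrt (M ^ p - y ^ p) ≠ 0 := (Real.sqrt_pos.mpr hd).ne'
    rw [hCMdef, hht, Real.sqrt_mul hbpos.le]
    have : M ^ (((n:ℝ)-1)/(n:ℝ)) / Real.sqrt b *
        (Real.sqrt (M ^ p) / Real.sqrt (M ^ p - y ^ p)) *
        (Real.sqrt b * Real.sqrt (M ^ p - y ^ p))
        = M ^ (((n:ℝ)-1)/(n:ℝ)) * Real.sqrt (M ^ p) := by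
      field_simp
    rw [this, hMq]
  -- main comparison: every x < L/2 is at most CM * Ψ 1
  have hΨ1nn : 0 ≤ Ψ 1 :=
    intervalIntegral.integral_nonneg (by norm_num) (fun u _ => hhnn u)
  have hmain : ∀ x ∈ Ioo 0 (L/2), x ≤ CM * Ψ 1 := by
    intro x hx
    have hΦd : ∀ v ∈ Ioo 0 (L/2),
        HasDerivAt (fun w => CM * Ψ (F w / M) - w)
          (CM * (h (F v / M) * (deriv F v / M)) - 1) v := by
      intro v hv
      have hFv0 : 0 < F v := hFpos v (hsub hv)
      have hFvM : F v < M := hincr ⟨hv.1.le, hv.2.le⟩ ⟨hhalfpos.le, le_refl _⟩ hv.2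
      have htmem : F v / M ∈ Ico (0:ℝ) 1 := ⟨by positivity, (div_lt_one hMpos).mpr hFvM⟩
      have h1 : HasDerivAt (fun w => F w / M) (deriv F v / M) v :=
        (hdiffF v (hsub hv)).div_const M
      have h2 : HasDerivAt (fun w => Ψ (F w / M)) (h (F v / M) * (deriv F v / M)) v :=
        by exact (hΨd _ htmem).comp v h1
      exact (h2.const_mul CM).sub (hasDerivAt_id v)
    have hΦd' : ∀ v ∈ Ioo 0 (L/2), 1 ≤ CM * (h (F v / M) * (deriv F v / M)) := by
      intro v hv
      have hFv0 : 0 < F v := hFpos v (hsub hv)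
      have hFvM : F v < M := hincr ⟨hv.1.le, hv.2.le⟩ ⟨hhalfpos.le, le_refl _⟩ hv.2
      have hg := hlow v hv
      have hk := hkey (F v) hFv0.le hFvM
      have h5 : M ≤ CM * h (F v / M) * deriv F v := by
        calc M = CM * h (F v / M) * Real.sqrt (b * (M ^ p - (F v) ^ p)) := hk.symm
          _ ≤ CM * h (F v / M) * deriv F v :=
            mul_le_mul_of_nonneg_left hg (mul_nonneg hCM0 (hhnn _))
      have h6 : CM * (h (F v / M) * (deriv F v / M)) = CM * h (F v / M) * deriv F v / M := by
        ring
      rw [h6, le_div_iff₀ hMpos, one_mul]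
      exact h5
    have hstep : ∀ ε ∈ Ioo 0 x, x ≤ CM * Ψ (F x / M) + ε := by
      intro ε hε
      have hIccsub : Icc ε x ⊆ Ioo 0 (L/2) := fun v hv =>
        ⟨lt_of_lt_of_le hε.1 hv.1, lt_of_le_of_lt hv.2 hx.2⟩
      have hmono : MonotoneOn (fun w => CM * Ψ (F w / M) - w) (Icc ε x) := by
        apply monotoneOn_of_deriv_nonneg (convex_Icc _ _)
        · intro v hv
          exact ((hΦd v (hIccsub hv)).differentiableAt).continuousAt.continuousWithinAt
        · rw [interior_Icc]
          intro v hv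
          exact ((hΦd v (hIccsub (Ioo_subset_Icc_self hv))).differentiableAt).differentiableWithinAt
        · rw [interior_Icc]
          intro v hv
          rw [(hΦd v (hIccsub (Ioo_subset_Icc_self hv))).deriv]
          linarith [hΦd' v (hIccsub (Ioo_subset_Icc_self hv))]
      have h7 := hmono (left_mem_Icc.mpr hε.2.le) (right_mem_Icc.mpr hε.2.le) hε.2.le
      simp only at h7
      have hFε0 : 0 ≤ F ε / M := by
        have := (hFpos ε (hsub (hIccsub (left_mem_Icc.mpr hε.2.le)))).le
        positivity
      have hΨε : 0 ≤ Ψ (F ε / M) :=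
        intervalIntegral.integral_nonneg hFε0 (fun u _ => hhnn u)
      nlinarith [mul_nonneg hCM0 hΨε]
    have hx1 : x ≤ CM * Ψ (F x / M) := by
      by_contra hcon
      push_neg at hcon
      have hFx0 : 0 ≤ F x / M := by
        have := (hFpos x (hsub hx)).le
        positivity
      have hΨx : 0 ≤ CM * Ψ (F x / M) :=
        mul_nonneg hCM0 (intervalIntegral.integral_nonneg hFx0 (fun u _ => hhnn u))
      have hε : (x - CM * Ψ (F x / M))/2 ∈ Ioo 0 x := ⟨by linarith, by linarith⟩
      have := hstep _ hε
      linarith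
    have hΨle : Ψ (F x / M) ≤ Ψ 1 := by
      have hFx0 : 0 ≤ F x / M := by
        have := (hFpos x (hsub hx)).le
        positivity
      have hFxM : F x ≤ M := (hincr ⟨hx.1.le, hx.2.le⟩ ⟨hhalfpos.le, le_refl _⟩ hx.2).le
      have hle1 : F x / M ≤ 1 := (div_le_one hMpos).mpr hFxM
      exact intervalIntegral.integral_mono_interval (le_refl (0:ℝ)) hFx0 hle1
        (Filter.Eventually.of_forall (fun z => hhnn z)) hIint
    calc x ≤ CM * Ψ (F x / M) := hx1
      _ ≤ CM * Ψ 1 := mul_le_mul_of_nonneg_left hΨle hCM0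
  have hhalfle : L/2 ≤ CM * Ψ 1 := by
    by_contra hcon
    push_neg at hcon
    have hA : 0 ≤ CM * Ψ 1 := mul_nonneg hCM0 hΨ1nn
    have hxmem : (CM * Ψ 1 + L/2)/2 ∈ Ioo 0 (L/2) := ⟨by linarith, by linarith⟩
    have := hmain _ hxmem
    linarith
  -- final algebra
  have hAm : ((n:ℝ)^2 * ω ^ ((2:ℝ)/((n:ℝ)-1))) = m^2 := by
    have e : ((n:ℝ) * ω ^ ((1:ℝ)/((n:ℝ)-1)))^2 = (n:ℝ)^2 * ω ^ ((2:ℝ)/((n:ℝ)-1)) := by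
      rw [mul_pow, ← Real.rpow_natCast (ω ^ ((1:ℝ)/((n:ℝ)-1))) 2, ← Real.rpow_mul hωpos.le]
      congr 1
      push_cast
      ring
    rw [hmdef, e]
  have hApos : 0 < (n:ℝ)^2 * ω ^ ((2:ℝ)/((n:ℝ)-1)) := by positivity
  have hMpa : M ^ p ≤ ((n:ℝ)^2 * ω ^ ((2:ℝ)/((n:ℝ)-1))) / b := by
    rw [hAm, le_div_iff₀ hbpos]
    linarith [hMle]
  have hsqb : Real.sqrt b = b ^ ((1:ℝ)/2) := Real.sqrt_eq_rpow b
  have hCMle : CM ≤ ((n:ℝ)^2 * ω ^ ((2:ℝ)/((n:ℝ)-1))) ^ (((n:ℝ)-1)/2) *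
      (((n:ℝ)-1)/((n:ℝ)^2*c)) ^ ((n:ℝ)/2) := by
    have hbrpos : ∀ q : ℝ, 0 < b ^ q := fun q => Real.rpow_pos_of_pos hbpos q
    have e1 : M ^ (((n:ℝ)-1)/(n:ℝ)) = (M ^ p) ^ (((n:ℝ)-1)/2) := by
      rw [show ((n:ℝ)-1)/(n:ℝ) = p * (((n:ℝ)-1)/2) by rw [hp]; field_simp,
        Real.rpow_mul hMpos.le]
    have e2 : (M ^ p) ^ (((n:ℝ)-1)/2) ≤
        (((n:ℝ)^2 * ω ^ ((2:ℝ)/((n:ℝ)-1))) / b) ^ (((n:ℝ)-1)/2) :=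
      Real.rpow_le_rpow (Real.rpow_nonneg hMpos.le _) hMpa (by linarith)
    have e3 : ((((n:ℝ)^2 * ω ^ ((2:ℝ)/((n:ℝ)-1))) / b)) ^ (((n:ℝ)-1)/2)
        = ((n:ℝ)^2 * ω ^ ((2:ℝ)/((n:ℝ)-1))) ^ (((n:ℝ)-1)/2) / b ^ (((n:ℝ)-1)/2) :=
      Real.div_rpow hApos.le hbpos.le _
    have e6 : (((n:ℝ)-1)/((n:ℝ)^2*c)) = b⁻¹ := by rw [hbdef, inv_div]
    have e7 : (((n:ℝ)-1)/((n:ℝ)^2*c)) ^ ((n:ℝ)/2) = (b ^ ((n:ℝ)/2))⁻¹ := by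
      rw [e6, Real.inv_rpow hbpos.le]
    have e5 : b ^ (((n:ℝ)-1)/2) * b ^ ((1:ℝ)/2) = b ^ ((n:ℝ)/2) := by
      rw [← Real.rpow_add hbpos]
      congr 1
      ring
    rw [hCMdef, e1, hsqb]
    calc (M ^ p) ^ (((n:ℝ)-1)/2) / b ^ ((1:ℝ)/2)
        ≤ (((n:ℝ)^2 * ω ^ ((2:ℝ)/((n:ℝ)-1))) / b) ^ (((n:ℝ)-1)/2) / b ^ ((1:ℝ)/2) := by
          rw [div_eq_mul_inv, div_eq_mul_inv]
          exact mul_le_mul_of_nonneg_right e2 (inv_nonneg.mpr (hbrpos _).le)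
      _ = ((n:ℝ)^2 * ω ^ ((2:ℝ)/((n:ℝ)-1))) ^ (((n:ℝ)-1)/2) /
          (b ^ (((n:ℝ)-1)/2) * b ^ ((1:ℝ)/2)) := by rw [e3, div_div]
      _ = ((n:ℝ)^2 * ω ^ ((2:ℝ)/((n:ℝ)-1))) ^ (((n:ℝ)-1)/2) *
          (((n:ℝ)-1)/((n:ℝ)^2*c)) ^ ((n:ℝ)/2) := by rw [e5, e7, div_eq_mul_inv]
  have hfin : L/2 ≤ (((n:ℝ)^2 * ω ^ ((2:ℝ)/((n:ℝ)-1))) ^ (((n:ℝ)-1)/2) *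
      (((n:ℝ)-1)/((n:ℝ)^2*c)) ^ ((n:ℝ)/2)) * Ψ 1 :=
    le_trans hhalfle (mul_le_mul_of_nonneg_right hCMle hΨ1nn)
  show L ≤ 2 * ((n:ℝ)^2 * ω ^ ((2:ℝ)/((n:ℝ)-1))) ^ (((n:ℝ)-1)/2) *
      (((n:ℝ)-1)/((n:ℝ)^2*c)) ^ ((n:ℝ)/2) * Ψ 1
  nlinarith [hfin]
end

section
/- Let A(V_S, V) denote the area of a geodesic sphere enclosing volume V in the round 3-sphere of total volume V_S. Then for fixed V > 0, A(V_S, V)^{3/2} < √(36π) · V, and A(V_S, V)^{3/2} = √(36π)·V·(1 − k(V/V_S)^{2/3} + O((V/V_S)^{4/3})) as V/V_S → 0, where k = (3/10)(3π/2)^{2/3}. -/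
/-!
Write `s = sin θ` and `w = (3/2)(θ - sin θ cos θ)`. Then `A^{3/2} = √(36π)·(4π/3)ρ³·s³` and
`√(36π)·V = √(36π)·(4π/3)ρ³·w`, so everything reduces to comparing `s³` with `w`.
The inequality `s³ < w` holds because `w - s³` vanishes at `0` and has derivative
`3 sin²θ (1 - cos θ) > 0` on `(0, π)`.
For the expansion, alternating Taylor bounds for `sin` give `s³ = θ³ - θ⁵/2 + O(θ⁷)` and
`w = θ³ - θ⁵/5 + O(θ⁷)`, so `u = w^{1/3} = θ + O(θ³)` and `s³ - u³ + (3/10)u⁵ = O(θ⁷) = O(u⁷)`.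
Since `u³ = (3π/2)·V/V_S`, this is the claimed expansion.
-/

open Real Set
open scoped Nat

theorem nonneg_of_hasDerivAt_nonneg {g g' : ℝ → ℝ} (hg : ∀ x, HasDerivAt g (g' x) x)
    (hg0 : g 0 = 0) (hg' : ∀ x, 0 ≤ x → 0 ≤ g' x) {x : ℝ} (hx : 0 ≤ x) : 0 ≤ g x := by
  have hmono : MonotoneOn g (Ici 0) :=
    monotoneOn_of_hasDerivWithinAt_nonneg (convex_Ici 0)
      (fun y _ => (hg y).continuousAt.continuousWithinAt)
      (fun y _ => (hg y).hasDerivWithinAt) (fun y hy => hg' y (interior_subset hy))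
  simpa [hg0] using hmono self_mem_Ici hx hx

theorem strictMonoOn_Icc_of_hasDerivAt_pos {f f' : ℝ → ℝ} {a b : ℝ}
    (hf : ∀ x, HasDerivAt f (f' x) x) (hf' : ∀ x ∈ Ioo a b, 0 < f' x) :
    StrictMonoOn f (Icc a b) :=
  strictMonoOn_of_hasDerivWithinAt_pos (convex_Icc a b)
    (fun x _ => (hf x).continuousAt.continuousWithinAt) (fun x _ => (hf x).hasDerivWithinAt)
    (by simpa only [interior_Icc] using hf')

theorem mul_rpow_inv_mul_cancel {a x : ℝ} (ha : 0 < a) (hx : 0 ≤ x) (p : ℝ) :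
    a ^ p * (a⁻¹ * x) ^ p = x ^ p := by
  rw [← mul_rpow ha.le (by positivity), mul_inv_cancel_left₀ ha.ne']

theorem abs_cube_sub_mul_le_of_taylor_bounds {θ s u : ℝ} (h0 : 0 ≤ θ) (h1 : θ ≤ 1 / 2)
    (hu : 0 ≤ u) (hs : |s ^ 3 - (θ ^ 3 - θ ^ 5 / 2)| ≤ θ ^ 7)
    (hu3 : u ^ 3 ∈ Icc (θ ^ 3 - θ ^ 5 / 5) (θ ^ 3 - θ ^ 5 / 5 + 2 / 105 * θ ^ 7)) :
    |s ^ 3 - u ^ 3 * (1 - 3 / 10 * u ^ 2)| ≤ 4 * u ^ 3 * u ^ 4 := by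
  have hθ2 : θ ^ 2 ≤ 1 / 4 := by nlinarith
  have hε : 0 ≤ 1 - θ ^ 2 / 5 := by linarith
  have hu_le : u ≤ θ := by
    refine le_of_pow_le_pow_left₀ three_ne_zero h0 (hu3.2.trans ?_)
    nlinarith [pow_nonneg h0 5]
  have le_u : (1 - θ ^ 2 / 5) * θ ≤ u := by
    refine le_of_pow_le_pow_left₀ three_ne_zero hu (le_trans ?_ hu3.1)
    calc ((1 - θ ^ 2 / 5) * θ) ^ 3 = (1 - θ ^ 2 / 5) ^ 3 * θ ^ 3 := by ring
      _ ≤ (1 - θ ^ 2 / 5) * θ ^ 3 := by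
          gcongr
          exact pow_le_of_le_one hε (by linarith [sq_nonneg θ]) three_ne_zero
      _ = θ ^ 3 - θ ^ 5 / 5 := by ring
  have hu5 : (1 - θ ^ 2) * θ ^ 5 ≤ u ^ 5 := by
    calc (1 - θ ^ 2) * θ ^ 5 ≤ (1 - θ ^ 2 / 5) ^ 5 * θ ^ 5 := by
          gcongr
          have := one_add_mul_le_pow (a := -(θ ^ 2 / 5)) (by nlinarith) 5
          push_cast at this
          linarith
      _ = ((1 - θ ^ 2 / 5) * θ) ^ 5 := by ring
      _ ≤ u ^ 5 := by gcongr
  have hu7 : 1 / 2 * θ ^ 7 ≤ u ^ 7 := by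
    calc 1 / 2 * θ ^ 7 ≤ (1 - θ ^ 2 / 5) ^ 7 * θ ^ 7 := by
          gcongr
          have := one_add_mul_le_pow (a := -(θ ^ 2 / 5)) (by nlinarith) 7
          push_cast at this
          linarith
      _ = ((1 - θ ^ 2 / 5) * θ) ^ 7 := by ring
      _ ≤ u ^ 7 := by gcongr
  have hu5' : u ^ 5 ≤ θ ^ 5 := by gcongr
  rw [abs_le] at hs ⊢
  constructor <;> linarith [hs.1, hs.2, hu3.1, hu3.2]

namespace Real

noncomputable def sinTaylor (n : ℕ) (x : ℝ) : ℝ :=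
  ∑ k ∈ Finset.range n, (-1) ^ k * x ^ (2 * k + 1) / (2 * k + 1)!

noncomputable def cosTaylor (n : ℕ) (x : ℝ) : ℝ :=
  ∑ k ∈ Finset.range n, (-1) ^ k * x ^ (2 * k) / (2 * k)!

theorem hasDerivAt_sinTaylor (n : ℕ) (x : ℝ) :
    HasDerivAt (sinTaylor n) (cosTaylor n x) x := by
  unfold sinTaylor cosTaylor
  refine HasDerivAt.fun_sum fun k _ => ?_
  refine (((hasDerivAt_pow (2 * k + 1) x).const_mul ((-1 : ℝ) ^ k)).div_const
    ((2 * k + 1)! : ℝ)).congr_deriv ?_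
  rw [Nat.factorial_succ]
  push_cast
  field_simp

theorem hasDerivAt_cosTaylor (n : ℕ) (x : ℝ) :
    HasDerivAt (cosTaylor (n + 1)) (-sinTaylor n x) x := by
  have h : cosTaylor (n + 1) =
      fun y : ℝ => -∑ k ∈ Finset.range n, (-1) ^ k * y ^ (2 * k + 2) / (2 * k + 2)! + 1 := by
    ext y
    simp [cosTaylor, Finset.sum_range_succ', pow_succ, mul_add, neg_div, Finset.sum_neg_distrib]
  rw [h, sinTaylor]
  refine (HasDerivAt.fun_sum fun k _ => ?_).neg.add_const 1
  refine (((hasDerivAt_pow (2 * k + 2) x).const_mul ((-1 : ℝ) ^ k)).div_const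
    ((2 * k + 2)! : ℝ)).congr_deriv ?_
  rw [Nat.factorial_succ]
  push_cast
  field_simp
  ring

/-- Each remainder is an antiderivative of the other (up to sign), so starting from `cos ≤ 1`
the signs propagate up the ladder. -/
theorem cos_sin_taylor_alternating (n : ℕ) {x : ℝ} (hx : 0 ≤ x) :
    0 ≤ (-1) ^ (n + 1) * (cos x - cosTaylor (n + 1) x) ∧
      0 ≤ (-1) ^ (n + 1) * (sin x - sinTaylor (n + 1) x) := by
  have sin_of_cos (m : ℕ)
      (hcos : ∀ y, 0 ≤ y → 0 ≤ (-1) ^ (m + 1) * (cos y - cosTaylor (m + 1) y)) {y : ℝ}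
      (hy : 0 ≤ y) : 0 ≤ (-1) ^ (m + 1) * (sin y - sinTaylor (m + 1) y) :=
    nonneg_of_hasDerivAt_nonneg
      (fun z => ((hasDerivAt_sin z).sub (hasDerivAt_sinTaylor (m + 1) z)).const_mul _)
      (by simp [sinTaylor]) hcos hy
  induction n generalizing x with
  | zero =>
    have hcos (y : ℝ) : 0 ≤ (-1) ^ (0 + 1) * (cos y - cosTaylor (0 + 1) y) := by
      simp [cosTaylor, cos_le_one]
    exact ⟨hcos x, sin_of_cos 0 (fun y _ => hcos y) hx⟩
  | succ n ih =>
    have hcos (y : ℝ) (hy : 0 ≤ y) :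
        0 ≤ (-1) ^ (n + 1 + 1) * (cos y - cosTaylor (n + 1 + 1) y) :=
      nonneg_of_hasDerivAt_nonneg
        (fun z => ((hasDerivAt_cos z).sub (hasDerivAt_cosTaylor (n + 1) z)).const_mul _)
        (by simp [cosTaylor, Finset.sum_range_succ'])
        (fun z hz => (ih hz).2.trans_eq (by ring)) hy
    exact ⟨hcos x hx, sin_of_cos (n + 1) hcos hx⟩

theorem sin_le_taylor_five {x : ℝ} (hx : 0 ≤ x) : sin x ≤ x - x ^ 3 / 6 + x ^ 5 / 120 := by
  have h := (cos_sin_taylor_alternating 2 hx).2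
  norm_num [sinTaylor, Finset.sum_range_succ, Nat.factorial] at h
  linarith

theorem taylor_seven_le_sin {x : ℝ} (hx : 0 ≤ x) :
    x - x ^ 3 / 6 + x ^ 5 / 120 - x ^ 7 / 5040 ≤ sin x := by
  have h := (cos_sin_taylor_alternating 3 hx).2
  norm_num [sinTaylor, Finset.sum_range_succ, Nat.factorial] at h
  linarith

theorem hasDerivAt_sub_sin_mul_cos (x : ℝ) :
    HasDerivAt (fun θ => θ - sin θ * cos θ) (2 * sin x ^ 2) x :=
  ((hasDerivAt_id x).sub ((hasDerivAt_sin x).mul (hasDerivAt_cos x))).congr_deriv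
    (by linear_combination -sin_sq_add_cos_sq x)

theorem sub_sin_mul_cos_pos {θ : ℝ} (hθ : 0 < θ) : 0 < θ - sin θ * cos θ := by
  have := sin_lt (by linarith : 0 < 2 * θ)
  rw [sin_two_mul] at this
  linarith

theorem strictMonoOn_sub_sin_mul_cos : StrictMonoOn (fun θ => θ - sin θ * cos θ) (Icc 0 π) :=
  strictMonoOn_Icc_of_hasDerivAt_pos hasDerivAt_sub_sin_mul_cos fun x hx => by
    have := sin_pos_of_pos_of_lt_pi hx.1 hx.2
    positivity

theorem sin_cube_lt_three_halves_mul_sub_sin_mul_cos {θ : ℝ} (hθ : θ ∈ Ioc 0 π) :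
    sin θ ^ 3 < 3 / 2 * (θ - sin θ * cos θ) := by
  have hd (x : ℝ) : HasDerivAt (fun θ => 3 / 2 * (θ - sin θ * cos θ) - sin θ ^ 3)
      (3 * sin x ^ 2 * (1 - cos x)) x :=
    (((hasDerivAt_sub_sin_mul_cos x).const_mul (3 / 2)).sub
      ((hasDerivAt_sin x).pow 3)).congr_deriv (by push_cast; ring)
  have hmono := strictMonoOn_Icc_of_hasDerivAt_pos hd fun x hx => by
    have hsin := sin_pos_of_pos_of_lt_pi hx.1 hx.2
    have hcos : cos x < 1 := by nlinarith [sin_sq_add_cos_sq x, cos_le_one x]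
    have := sub_pos.2 hcos
    positivity
  simpa using hmono (left_mem_Icc.2 pi_pos.le) ⟨hθ.1.le, hθ.2⟩ hθ.1

theorem abs_sin_cube_sub_le {θ : ℝ} (h0 : 0 ≤ θ) (h1 : θ ≤ 1) :
    |sin θ ^ 3 - (θ ^ 3 - θ ^ 5 / 2)| ≤ θ ^ 7 := by
  have hl := sin_ge_sub_cube h0
  have hu := sin_le_taylor_five h0
  have hcube : θ ^ 3 ≤ θ := by
    nlinarith [mul_nonneg (mul_nonneg h0 (sub_nonneg.2 h1)) (by linarith : (0 : ℝ) ≤ 1 + θ)]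
  have hs : 0 ≤ sin θ := by nlinarith
  have h97 : θ ^ 9 ≤ θ ^ 7 := pow_le_pow_of_le_one h0 h1 (by norm_num)
  have h117 : θ ^ 11 ≤ θ ^ 7 := pow_le_pow_of_le_one h0 h1 (by norm_num)
  have h137 : θ ^ 13 ≤ θ ^ 7 := pow_le_pow_of_le_one h0 h1 (by norm_num)
  have h157 : θ ^ 15 ≤ θ ^ 7 := pow_le_pow_of_le_one h0 h1 (by norm_num)
  rw [abs_le]
  constructor
  · have := pow_le_pow_left₀ (by linarith) hl 3
    nlinarith [pow_nonneg h0 7, pow_nonneg h0 9]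
  · have := pow_le_pow_left₀ hs hu 3
    nlinarith [pow_nonneg h0 9, pow_nonneg h0 13]

theorem three_halves_mul_sub_sin_mul_cos_mem_Icc {θ : ℝ} (h0 : 0 ≤ θ) :
    3 / 2 * (θ - sin θ * cos θ) ∈
      Icc (θ ^ 3 - θ ^ 5 / 5) (θ ^ 3 - θ ^ 5 / 5 + 2 / 105 * θ ^ 7) := by
  have h2 : sin θ * cos θ = sin (2 * θ) / 2 := by rw [sin_two_mul]; ring
  have h0' : 0 ≤ 2 * θ := by linarith
  rw [h2]
  constructor <;> nlinarith [sin_le_taylor_five h0', taylor_seven_le_sin h0']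

theorem abs_sin_cube_sub_le_rpow {θ : ℝ} (h0 : 0 < θ) (h1 : θ ≤ 1 / 2) :
    |sin θ ^ 3 - 3 / 2 * (θ - sin θ * cos θ) *
        (1 - 3 / 10 * (3 / 2 * (θ - sin θ * cos θ)) ^ ((2 : ℝ) / 3))| ≤
      4 * (3 / 2 * (θ - sin θ * cos θ)) * (3 / 2 * (θ - sin θ * cos θ)) ^ ((4 : ℝ) / 3) := by
  set w := 3 / 2 * (θ - sin θ * cos θ)
  have hw : 0 ≤ w := by
    have := sub_sin_mul_cos_pos h0
    positivity
  have hpow (k : ℕ) : (w ^ ((1 : ℝ) / 3)) ^ k = w ^ ((k : ℝ) / 3) := by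
    rw [← rpow_natCast, ← rpow_mul hw]
    ring_nf
  have hw3 : (w ^ ((1 : ℝ) / 3)) ^ 3 = w := by simpa using hpow 3
  have key := abs_cube_sub_mul_le_of_taylor_bounds (u := w ^ ((1 : ℝ) / 3)) h0.le h1
    (by positivity) (abs_sin_cube_sub_le h0.le (by linarith))
    (by rw [hw3]; exact three_halves_mul_sub_sin_mul_cos_mem_Icc h0.le)
  rwa [hw3, hpow, hpow] at key

end Real

noncomputable def geodesicSphereArea (ρ θ : ℝ) : ℝ := 4 * π * ρ ^ 2 * sin θ ^ 2

noncomputable def geodesicBallVolume (ρ θ : ℝ) : ℝ := 2 * π * ρ ^ 3 * (θ - sin θ * cos θ)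

noncomputable def sphereVolume (ρ : ℝ) : ℝ := 2 * π ^ 2 * ρ ^ 3

theorem geodesicSphereArea_rpow_three_halves {ρ θ : ℝ} (hρ : 0 ≤ ρ) (hθ : θ ∈ Icc 0 π) :
    geodesicSphereArea ρ θ ^ ((3 : ℝ) / 2) = √(36 * π) * (4 * π / 3 * ρ ^ 3) * sin θ ^ 3 := by
  have hs : 0 ≤ sin θ := sin_nonneg_of_nonneg_of_le_pi hθ.1 hθ.2
  have hsq : √(36 * π) ^ 2 = 36 * π := sq_sqrt (by positivity)
  have hbase : geodesicSphereArea ρ θ = (√(36 * π) / 3 * ρ * sin θ) ^ 2 := by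
    rw [geodesicSphereArea]
    linear_combination (-(ρ ^ 2 * sin θ ^ 2) / 9) * hsq
  rw [hbase, ← rpow_natCast, ← rpow_mul (by positivity),
    show ((2 : ℕ) : ℝ) * (3 / 2) = (3 : ℕ) by norm_num, rpow_natCast]
  linear_combination (√(36 * π) * ρ ^ 3 * sin θ ^ 3 / 27) * hsq

theorem geodesicBallVolume_eq (ρ θ : ℝ) :
    geodesicBallVolume ρ θ = 4 * π / 3 * ρ ^ 3 * (3 / 2 * (θ - sin θ * cos θ)) := by
  rw [geodesicBallVolume]
  ring

theorem geodesicBallVolume_div_sphereVolume {ρ : ℝ} (hρ : 0 < ρ) (θ : ℝ) :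
    geodesicBallVolume ρ θ / sphereVolume ρ = (θ - sin θ * cos θ) / π := by
  rw [geodesicBallVolume, sphereVolume]
  field_simp

theorem geodesicSphereArea_rpow_lt {ρ θ : ℝ} (hρ : 0 < ρ) (hθ : θ ∈ Ioc 0 π) :
    geodesicSphereArea ρ θ ^ ((3 : ℝ) / 2) < √(36 * π) * geodesicBallVolume ρ θ := by
  rw [geodesicSphereArea_rpow_three_halves hρ.le (Ioc_subset_Icc_self hθ), geodesicBallVolume_eq]
  exact (mul_lt_mul_of_pos_left (sin_cube_lt_three_halves_mul_sub_sin_mul_cos hθ)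
    (by positivity)).trans_eq (mul_assoc _ _ _)

theorem le_half_of_geodesicBallVolume_div_le {ρ θ : ℝ} (hρ : 0 < ρ) (hθ : θ ∈ Icc 0 π)
    (h : geodesicBallVolume ρ θ / sphereVolume ρ ≤ (1 / 2 - sin (1 / 2) * cos (1 / 2)) / π) :
    θ ≤ 1 / 2 := by
  rw [geodesicBallVolume_div_sphereVolume hρ, div_le_div_iff_of_pos_right pi_pos] at h
  exact (strictMonoOn_sub_sin_mul_cos.le_iff_le hθ
    ⟨by norm_num, by linarith [pi_gt_three]⟩).1 h

theorem abs_geodesicSphereArea_rpow_sub_le {ρ θ : ℝ} (hρ : 0 < ρ) (h0 : 0 < θ)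
    (h1 : θ ≤ 1 / 2) :
    |geodesicSphereArea ρ θ ^ ((3 : ℝ) / 2) - √(36 * π) * geodesicBallVolume ρ θ *
        (1 - 3 / 10 * (3 * π / 2) ^ ((2 : ℝ) / 3) *
          (geodesicBallVolume ρ θ / sphereVolume ρ) ^ ((2 : ℝ) / 3))| ≤
      4 * (3 * π / 2) ^ ((4 : ℝ) / 3) * √(36 * π) * geodesicBallVolume ρ θ *
        (geodesicBallVolume ρ θ / sphereVolume ρ) ^ ((4 : ℝ) / 3) := by
  have hθ : θ ∈ Icc 0 π := ⟨h0.le, by linarith [pi_gt_three]⟩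
  have hw : 0 ≤ 3 / 2 * (θ - sin θ * cos θ) := by
    have := sub_sin_mul_cos_pos h0
    positivity
  have ha : 0 < 3 * π / 2 := by positivity
  have hK : 0 < √(36 * π) * (4 * π / 3 * ρ ^ 3) := by positivity
  have hratio : geodesicBallVolume ρ θ / sphereVolume ρ =
      (3 * π / 2)⁻¹ * (3 / 2 * (θ - sin θ * cos θ)) := by
    rw [geodesicBallVolume_div_sphereVolume hρ]
    field_simp
  rw [hratio, geodesicSphereArea_rpow_three_halves hρ.le hθ, geodesicBallVolume_eq,
    mul_assoc (3 / 10 : ℝ), mul_rpow_inv_mul_cancel ha hw]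
  set w := 3 / 2 * (θ - sin θ * cos θ)
  calc _ = √(36 * π) * (4 * π / 3 * ρ ^ 3) *
        |sin θ ^ 3 - w * (1 - 3 / 10 * w ^ ((2 : ℝ) / 3))| := by
        rw [← abs_of_pos hK, ← abs_mul, abs_of_pos hK]
        ring_nf
    _ ≤ √(36 * π) * (4 * π / 3 * ρ ^ 3) * (4 * w * w ^ ((4 : ℝ) / 3)) := by
        gcongr
        exact abs_sin_cube_sub_le_rpow h0 h1
    _ = _ := by
        rw [← mul_rpow_inv_mul_cancel ha hw]
        ring

/-- Isoperimetric profile of the round 3-sphere: parametrize the round 3-sphere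
of radius `ρ` (total volume `V_S = 2π²ρ³`) by colatitude `θ ∈ (0,π]`, so the
geodesic sphere at colatitude `θ` has area `A = 4πρ²sin²θ` and encloses volume
`V = 2πρ³(θ − sin θ cos θ)`.  Then `A^{3/2} < √(36π)·V`, and
`A^{3/2} = √(36π)·V·(1 − k(V/V_S)^{2/3} + O((V/V_S)^{4/3}))` as `V/V_S → 0`,
where `k = (3/10)(3π/2)^{2/3}`. -/
theorem round_sphere_isoperimetric_profile :
    (∀ ρ θ : ℝ, 0 < ρ → θ ∈ Set.Ioc 0 π →
      (4 * π * ρ ^ 2 * Real.sin θ ^ 2) ^ ((3:ℝ)/2) <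
        Real.sqrt (36 * π) * (2 * π * ρ ^ 3 * (θ - Real.sin θ * Real.cos θ))) ∧
    (∃ C > (0:ℝ), ∃ δ > (0:ℝ), ∀ ρ θ : ℝ, 0 < ρ → θ ∈ Set.Ioc 0 π →
      (2 * π * ρ ^ 3 * (θ - Real.sin θ * Real.cos θ)) / (2 * π ^ 2 * ρ ^ 3) ≤ δ →
      |(4 * π * ρ ^ 2 * Real.sin θ ^ 2) ^ ((3:ℝ)/2) -
        Real.sqrt (36 * π) * (2 * π * ρ ^ 3 * (θ - Real.sin θ * Real.cos θ)) *
          (1 - (3/10) * (3 * π / 2) ^ ((2:ℝ)/3) *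
            ((2 * π * ρ ^ 3 * (θ - Real.sin θ * Real.cos θ)) /
              (2 * π ^ 2 * ρ ^ 3)) ^ ((2:ℝ)/3))| ≤
      C * Real.sqrt (36 * π) * (2 * π * ρ ^ 3 * (θ - Real.sin θ * Real.cos θ)) *
        ((2 * π * ρ ^ 3 * (θ - Real.sin θ * Real.cos θ)) /
          (2 * π ^ 2 * ρ ^ 3)) ^ ((4:ℝ)/3)) := by
  refine ⟨fun ρ θ hρ hθ => geodesicSphereArea_rpow_lt hρ hθ, 4 * (3 * π / 2) ^ ((4 : ℝ) / 3),
    by positivity, (1 / 2 - sin (1 / 2) * cos (1 / 2)) / π, ?_, fun ρ θ hρ hθ hδ =>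
    abs_geodesicSphereArea_rpow_sub_le hρ hθ.1
      (le_half_of_geodesicBallVolume_div_le hρ (Ioc_subset_Icc_self hθ) hδ)⟩
  exact div_pos (sub_sin_mul_cos_pos (by norm_num)) pi_pos
end
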